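/- arXiv:math/0411322 — 2 statements merged into one kernel-verified Lean document; each statement's English description precedes it below -/
import Mathlib

section
/- Let G and K be groups, φ : G → K a group homomorphism, K' a subgroup of K, and H = φ⁻¹(K'). Let a, b ∈ H and h ∈ G be such that b = h⁻¹ a h. Then there exists h' ∈ H with b = h'⁻¹ a h' if and only if there exists c ∈ C_G(a) with φ(c·h) ∈ K' (i.e., if and only if φ(C_G(a)·h) ∩ K' is nonempty). -/
namespace Subgroup

variable {G : Type*} [Group G]

theorem conj_eq_conj_iff_mul_inv_mem_centralizer (a g h : G) :
    g⁻¹ * a * g = h⁻¹ * a * h ↔ g * h⁻¹ ∈ centralizer ({a} : Set G) := by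
  rw [mem_centralizer_singleton_iff]
  constructor
  · intro hgh
    calc g * h⁻¹ * a = g * (h⁻¹ * a * h) * h⁻¹ := by group
      _ = g * (g⁻¹ * a * g) * h⁻¹ := by rw [hgh]
      _ = a * (g * h⁻¹) := by group
  · intro hcomm
    calc g⁻¹ * a * g = h⁻¹ * (g * h⁻¹)⁻¹ * (a * (g * h⁻¹)) * h := by group
      _ = h⁻¹ * (g * h⁻¹)⁻¹ * (g * h⁻¹ * a) * h := by rw [hcomm]
      _ = h⁻¹ * a * h := by group

/-- The elements conjugating `a` to `h⁻¹ * a * h` form the right coset `C_G(a) * h`. -/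
theorem exists_mem_conj_eq_conj_iff (H : Subgroup G) (a h : G) :
    (∃ g ∈ H, g⁻¹ * a * g = h⁻¹ * a * h) ↔ ∃ c ∈ centralizer ({a} : Set G), c * h ∈ H := by
  constructor
  · rintro ⟨g, hgH, hg⟩
    exact ⟨g * h⁻¹, (conj_eq_conj_iff_mul_inv_mem_centralizer a g h).mp hg, by simpa using hgH⟩
  · rintro ⟨c, hc, hchH⟩
    refine ⟨c * h, hchH, (conj_eq_conj_iff_mul_inv_mem_centralizer a _ h).mpr ?_⟩
    simpa using hc

end Subgroup

theorem stmt_0_general {G K : Type*} [Group G] [Group K] (φ : G →* K) (K' : Subgroup K)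
    (H : Subgroup G) (hH : H = K'.comap φ)
    (a b : G) (h : G) (hconj : b = h⁻¹ * a * h) :
    (∃ h' ∈ H, b = h'⁻¹ * a * h') ↔
      ∃ c ∈ Subgroup.centralizer ({a} : Set G), φ (c * h) ∈ K' := by
  subst hH hconj
  simpa only [eq_comm, Subgroup.mem_comap] using
    Subgroup.exists_mem_conj_eq_conj_iff (K'.comap φ) a h

/-- Correctness of Algorithm 3.1: given `b = h⁻¹ * a * h` with `a, b ∈ H = φ⁻¹(K')`,
`a` and `b` are conjugate by an element of `H` iff some `c` in the centralizer of `a`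
in `G` satisfies `φ (c * h) ∈ K'`. -/
theorem stmt_0 {G K : Type*} [Group G] [Group K] (φ : G →* K) (K' : Subgroup K)
    (H : Subgroup G) (hH : H = K'.comap φ)
    (a b : G) (ha : a ∈ H) (hb : b ∈ H) (h : G) (hconj : b = h⁻¹ * a * h) :
    (∃ h' ∈ H, b = h'⁻¹ * a * h') ↔
      ∃ c ∈ Subgroup.centralizer ({a} : Set G), φ (c * h) ∈ K' :=
  stmt_0_general φ K' H hH a b h hconj
end

section
/- Let G and K be groups, φ : G → K a group homomorphism, K' a subgroup of K, and H = φ⁻¹(K'). Then two elements a, b ∈ H are conjugate by an element of H if and only if there exists h ∈ G such that b = h⁻¹ a h and there exists c ∈ C_G(a) with φ(c·h) ∈ K'. -/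
theorem inv_mul_mul_eq_of_mem_centralizer {G : Type*} [Group G] {a c : G}
    (hc : c ∈ Subgroup.centralizer ({a} : Set G)) (h : G) :
    (c * h)⁻¹ * a * (c * h) = h⁻¹ * a * h := by
  have hac : c⁻¹ * a * c = a := by
    rw [mul_assoc, ← Subgroup.mem_centralizer_singleton_iff.mp hc, inv_mul_cancel_left]
  calc (c * h)⁻¹ * a * (c * h) = h⁻¹ * (c⁻¹ * a * c) * h := by group
    _ = h⁻¹ * a * h := by rw [hac]

theorem stmt_3_general {G K : Type*} [Group G] [Group K] (φ : G →* K) (K' : Subgroup K)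
    (H : Subgroup G) (hH : H = K'.comap φ)
    (a b : G) :
    (∃ h' ∈ H, b = h'⁻¹ * a * h') ↔
      ∃ h : G, b = h⁻¹ * a * h ∧
        ∃ c ∈ Subgroup.centralizer ({a} : Set G), φ (c * h) ∈ K' := by
  subst hH
  constructor
  · rintro ⟨h', hh', rfl⟩
    exact ⟨h', rfl, 1, Subgroup.one_mem _, by rwa [one_mul]⟩
  · rintro ⟨h, rfl, c, hc, hch⟩
    exact ⟨c * h, hch, (inv_mul_mul_eq_of_mem_centralizer hc h).symm⟩

/-- Correctness of Algorithm 3.2: for `a, b ∈ H = φ⁻¹(K')`, `a` and `b` are conjugate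
by an element of `H` iff there exists `h ∈ G` with `b = h⁻¹ * a * h` and some `c` in the
centralizer of `a` in `G` with `φ (c * h) ∈ K'`. -/
theorem stmt_3 {G K : Type*} [Group G] [Group K] (φ : G →* K) (K' : Subgroup K)
    (H : Subgroup G) (hH : H = K'.comap φ)
    (a b : G) (ha : a ∈ H) (hb : b ∈ H) :
    (∃ h' ∈ H, b = h'⁻¹ * a * h') ↔
      ∃ h : G, b = h⁻¹ * a * h ∧
        ∃ c ∈ Subgroup.centralizer ({a} : Set G), φ (c * h) ∈ K' :=
  stmt_3_general φ K' H hH a b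
end
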